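/- Let S be a set of 4 points in ℝ² in general position that are in convex position (all four are vertices of their convex hull). Then no edge of the convex hull of S is an exit edge of S; the only exit edges are the two diagonals. -/

import Mathlib

open Finset

/-- Points of the plane. -/
abbrev Pt := ℝ × ℝ

/-- Twice the signed area of the triangle `p q r` (orientation determinant). -/
def det3 (p q r : Pt) : ℝ := (q.1 - p.1) * (r.2 - p.2) - (q.2 - p.2) * (r.1 - p.1)

/-- A finite point set is in general position if no three distinct points are collinear. -/
def GenPos (S : Finset Pt) : Prop :=
  ∀ p ∈ S, ∀ q ∈ S, ∀ r ∈ S, p ≠ q → p ≠ r → q ≠ r → det3 p q r ≠ 0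

/-- The line through `u` and `v` strictly separates the points `x` and `y`. -/
def StrictSep (u v x y : Pt) : Prop := det3 u v x * det3 u v y < 0

/-- `ab` is an exit edge of `S` with witness `c`: no point `p ∈ S \ {a,b,c}` is such that
the line through `a` and `p` strictly separates `b` from `c`, or the line through `b`
and `p` strictly separates `a` from `c`. -/
def IsExitWitness (S : Finset Pt) (a b c : Pt) : Prop :=
  a ∈ S ∧ b ∈ S ∧ c ∈ S ∧ a ≠ b ∧ a ≠ c ∧ b ≠ c ∧
    ∀ p ∈ S, p ≠ a → p ≠ b → p ≠ c → ¬ StrictSep a p b c ∧ ¬ StrictSep b p a c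

/-- `ab` is an exit edge of `S` if it has some witness. -/
def IsExitEdge (S : Finset Pt) (a b : Pt) : Prop := ∃ c, IsExitWitness S a b c

/-- `ab` is an edge of the convex hull of `S`: all other points of `S` lie strictly on
one side of the line through `a` and `b`. -/
def IsHullEdge (S : Finset Pt) (a b : Pt) : Prop :=
  (∀ p ∈ S, p ≠ a → p ≠ b → 0 < det3 a b p) ∨ (∀ p ∈ S, p ≠ a → p ≠ b → det3 a b p < 0)

/-- The four points `p q r s`, in this cyclic order, are the vertices of a convex
quadrilateral traced counterclockwise. -/
def ConvexCCW4 (p q r s : Pt) : Prop :=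
  0 < det3 p q r ∧ 0 < det3 q r s ∧ 0 < det3 r s p ∧ 0 < det3 s p q

/-- `a, b, x, y` span a convex quadrilateral with `ab` as one of its edges. -/
def ConvexQuadOnEdge (a b x y : Pt) : Prop :=
  ConvexCCW4 a b x y ∨ ConvexCCW4 a b y x ∨ ConvexCCW4 b a x y ∨ ConvexCCW4 b a y x

/-- The open interior of the quadrilateral spanned by `a, b, x, y` (in convex position)
contains no point of `S`. -/
def QuadInteriorEmpty (S : Finset Pt) (a b x y : Pt) : Prop :=
  ∀ p ∈ S, p ∉ interior (convexHull ℝ ({a, b, x, y} : Set Pt))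

/-!
The diagonals of a convex quadrilateral `abcd` cross: the line `ac` strictly separates `b`
from `d`. Hence for a hull edge `ab` neither remaining vertex is a witness: with witness `c`
the line `bd` separates `a` from `c`, with witness `d` the line `ac` separates `b` from `d`.
For the diagonal `ac` the vertex `b` is a witness, since the only other point is `d` and the
lines `da`, `dc` carry hull edges, which leave the rest of the quadrilateral on one side.
Everything else follows from the cyclic symmetry of `ConvexCCW4`.
-/

theorem det3_rotate (p q r : Pt) : det3 q r p = det3 p q r := by
  unfold det3; ring

theorem det3_swap_left (p q r : Pt) : det3 q p r = -det3 p q r := by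
  unfold det3; ring

theorem det3_swap_right (p q r : Pt) : det3 p r q = -det3 p q r := by
  unfold det3; ring

theorem ne_of_det3_ne_zero {p q r : Pt} (h : det3 p q r ≠ 0) : p ≠ q ∧ p ≠ r ∧ q ≠ r := by
  refine ⟨?_, ?_, ?_⟩ <;> rintro rfl <;> exact h (by unfold det3; ring)

theorem StrictSep.symm {u v x y : Pt} (h : StrictSep u v x y) : StrictSep u v y x := by
  unfold StrictSep at *; linarith

theorem strictSep_line_comm {u v x y : Pt} : StrictSep v u x y ↔ StrictSep u v x y := by
  unfold StrictSep
  rw [det3_swap_left u v x, det3_swap_left u v y, neg_mul_neg]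

theorem Finset.insert_rotate_four {α : Type*} [DecidableEq α] (a b c d : α) :
    ({b, c, d, a} : Finset α) = {a, b, c, d} := by
  ext; simp only [Finset.mem_insert, Finset.mem_singleton]; tauto

namespace ConvexCCW4

variable {a b c d : Pt}

theorem rotate (h : ConvexCCW4 a b c d) : ConvexCCW4 b c d a :=
  ⟨h.2.1, h.2.2.1, h.2.2.2, h.1⟩

theorem pairwise_ne (h : ConvexCCW4 a b c d) :
    a ≠ b ∧ a ≠ c ∧ a ≠ d ∧ b ≠ c ∧ b ≠ d ∧ c ≠ d := by
  obtain ⟨hab, hac, hbc⟩ := ne_of_det3_ne_zero h.1.ne'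
  obtain ⟨-, hbd, hcd⟩ := ne_of_det3_ne_zero h.2.1.ne'
  obtain ⟨hda, -, -⟩ := ne_of_det3_ne_zero h.2.2.2.ne'
  exact ⟨hab, hac, hda.symm, hbc, hbd, hcd⟩

theorem strictSep_diagonal (h : ConvexCCW4 a b c d) : StrictSep a c b d := by
  unfold StrictSep
  rw [det3_swap_right, ← det3_rotate a c d, neg_mul, neg_lt_zero]
  exact mul_pos h.1 h.2.2.1

theorem not_strictSep_edge (h : ConvexCCW4 a b c d) : ¬ StrictSep a b c d := by
  unfold StrictSep
  rw [det3_rotate d a b]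
  exact (mul_pos h.1 h.2.2.2).not_gt

theorem not_isExitEdge (h : ConvexCCW4 a b c d) : ¬ IsExitEdge {a, b, c, d} a b := by
  rintro ⟨w, -, -, hw, -, hwa, hwb, hall⟩
  obtain ⟨-, hac, had, hbc, hbd, hcd⟩ := h.pairwise_ne
  simp only [Finset.mem_insert, Finset.mem_singleton] at hw
  rcases hw with rfl | rfl | rfl | rfl
  · exact hwa rfl
  · exact hwb rfl
  · exact (hall d (by simp) had.symm hbd.symm hcd.symm).2 h.rotate.strictSep_diagonal.symm
  · exact (hall c (by simp) hac.symm hbc.symm hcd).1 h.strictSep_diagonal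

theorem isExitWitness_diagonal (h : ConvexCCW4 a b c d) : IsExitWitness {a, b, c, d} a c b := by
  obtain ⟨hab, hac, -, hbc, -, -⟩ := h.pairwise_ne
  refine ⟨by simp, by simp, by simp, hac, hab, hbc.symm, fun p hp hpa hpc hpb => ?_⟩
  obtain rfl : p = d := by
    simp only [Finset.mem_insert, Finset.mem_singleton] at hp; tauto
  refine ⟨fun hsep => h.rotate.rotate.rotate.not_strictSep_edge ?_,
    h.rotate.rotate.not_strictSep_edge⟩
  exact strictSep_line_comm.1 hsep.symm

end ConvexCCW4

theorem four_points_convex_position_exit_edges_general (S : Finset Pt) (a b c d : Pt)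
    (hS : S = {a, b, c, d})
    (hconv : ConvexCCW4 a b c d) :
    ¬ IsExitEdge S a b ∧ ¬ IsExitEdge S b c ∧ ¬ IsExitEdge S c d ∧ ¬ IsExitEdge S d a ∧
      IsExitEdge S a c ∧ IsExitEdge S b d := by
  subst hS
  have hbcda := hconv.rotate
  have hcdab := hbcda.rotate
  have hdabc := hcdab.rotate
  have hrot₁ := Finset.insert_rotate_four a b c d
  have hrot₂ := Finset.insert_rotate_four b c d a
  have hrot₃ := Finset.insert_rotate_four c d a b
  refine ⟨hconv.not_isExitEdge, ?_, ?_, ?_, ⟨b, hconv.isExitWitness_diagonal⟩, ?_⟩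
  · rw [← hrot₁]; exact hbcda.not_isExitEdge
  · rw [← hrot₁, ← hrot₂]; exact hcdab.not_isExitEdge
  · rw [← hrot₁, ← hrot₂, ← hrot₃]; exact hdabc.not_isExitEdge
  · rw [← hrot₁]; exact ⟨c, hbcda.isExitWitness_diagonal⟩

/-- For four points in convex position (counterclockwise order `a b c d`), no hull edge
is an exit edge, and both diagonals are exit edges. -/
theorem four_points_convex_position_exit_edges (S : Finset Pt) (a b c d : Pt)
    (hgp : GenPos S) (hS : S = {a, b, c, d}) (hcard : S.card = 4)
    (hconv : ConvexCCW4 a b c d) :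
    ¬ IsExitEdge S a b ∧ ¬ IsExitEdge S b c ∧ ¬ IsExitEdge S c d ∧ ¬ IsExitEdge S d a ∧
      IsExitEdge S a c ∧ IsExitEdge S b d :=
  four_points_convex_position_exit_edges_general S a b c d hS hconv
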